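/- (Reed–Solomon codes are MDS) Let F_q be a finite field with q elements, n = q - 1, and let α be a generator of the multiplicative group F_q^*. Fix 1 ≤ δ ≤ n and let g(x) = ∏_{i=1}^{δ-1} (x - α^i) ∈ F_q[x]. Let C ⊆ F_q^n be the cyclic code corresponding (under the F_q-linear bijection π : F_q^n → F_q[x]/(x^n - 1) sending (c_0, ..., c_{n-1}) to the class of c_0 + c_1 x + ... + c_{n-1} x^{n-1}) to the ideal generated by the class of g(x). Then C is a linear code of dimension k = n - δ + 1 and minimum distance d(C) = δ = n - k + 1; that is, C attains the Singleton bound. -/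

import Mathlib

/-!
Identify `F^n` with the polynomials of degree `< n`. As `g` divides `X^n - 1`, the code consists
of those polynomials that are divisible by `g`: the kernel of the surjection onto `F[X]/(g)`, of
dimension `n - deg g = n - δ + 1`. A nonzero codeword `p` vanishes at `α, α^2, …, α^(δ-1)`. If it
had only `w ≤ δ - 1` nonzero coefficients, the first `w` of these equations would be an invertible
Vandermonde system in them (the `α^i`, `i < n`, are distinct), forcing `p = 0`. So nonzero
codewords have weight `≥ δ`, and `g` itself, of degree `δ - 1`, has weight `≤ δ`.
-/

open Polynomial

/-- The map `π : F^n → F[x]/(x^n - 1)` sending `(c_0, …, c_{n-1})` to the residue class of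
`c_0 + c_1 x + ⋯ + c_{n-1} x^{n-1}`. -/
noncomputable def polyOfVec (F : Type*) [Field F] (n : ℕ) (c : Fin n → F) :
    AdjoinRoot (X ^ n - 1 : F[X]) :=
  AdjoinRoot.mk (X ^ n - 1 : F[X]) (∑ i : Fin n, C (c i) * X ^ (i : ℕ))

open Finset

theorem AddSubgroup.sInf_hammingDist_eq {ι G : Type*} [Fintype ι] [AddGroup G] [DecidableEq G]
    (C : AddSubgroup (ι → G)) {d : ℕ} (hlow : ∀ c ∈ C, c ≠ 0 → d ≤ hammingNorm c)
    (hattain : ∃ c ∈ C, c ≠ 0 ∧ hammingNorm c ≤ d) :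
    sInf {k | ∃ u ∈ C, ∃ v ∈ C, u ≠ v ∧ hammingDist u v = k} = d := by
  obtain ⟨c, hc, hc0, hcd⟩ := hattain
  have hmem : hammingNorm c ∈ {k | ∃ u ∈ C, ∃ v ∈ C, u ≠ v ∧ hammingDist u v = k} :=
    ⟨c, hc, 0, C.zero_mem, hc0, hammingDist_zero_right c⟩
  refine le_antisymm ((Nat.sInf_le hmem).trans hcd) (le_csInf ⟨_, hmem⟩ ?_)
  rintro _ ⟨u, hu, v, hv, huv, rfl⟩
  rw [hammingDist_eq_hammingNorm]
  exact hlow _ (C.add_mem (C.neg_mem hu) hv) (by rwa [Ne, neg_add_eq_zero])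

theorem hammingNorm_degreeLTEquiv {R : Type*} [Semiring R] [DecidableEq R] {n : ℕ}
    (p : degreeLT R n) :
    hammingNorm (degreeLTEquiv R n p) = #(p : R[X]).support := by
  refine card_bij (fun i _ => (i : ℕ)) (fun i hi => ?_) (fun i _ j _ h => Fin.ext h) fun k hk => ?_
  · simpa [degreeLTEquiv] using (mem_filter.mp hi).2
  · have hkn : k < n := by
      exact_mod_cast (le_degree_of_mem_supp k hk).trans_lt (mem_degreeLT.mp p.2)
    exact ⟨⟨k, hkn⟩, mem_filter.mpr ⟨mem_univ _, by simpa [degreeLTEquiv] using hk⟩, rfl⟩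

section CommRing

variable {R : Type*} [CommRing R]

theorem AdjoinRoot.mk_mem_span_mk_iff {f g p : R[X]} (hgf : g ∣ f) :
    AdjoinRoot.mk f p ∈ Ideal.span {AdjoinRoot.mk f g} ↔ g ∣ p := by
  rw [← Set.image_singleton, ← Ideal.map_span]
  exact (Ideal.mem_quotient_iff_mem (Ideal.span_singleton_le_span_singleton.mpr hgf)).trans
    Ideal.mem_span_singleton

variable [IsDomain R]

theorem IsPrimitiveRoot.prod_X_sub_C_pow_dvd {ζ : R} {n : ℕ} (hζ : IsPrimitiveRoot ζ n)
    (hn : 0 < n) {s : Finset ℕ} (hs : ∀ i ∈ s, i < n) :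
    ∏ i ∈ s, (X - C (ζ ^ i)) ∣ X ^ n - 1 := by
  classical
  calc ∏ i ∈ s, (X - C (ζ ^ i)) = ∏ x ∈ s.image (ζ ^ ·), (X - C x) :=
        (prod_image (f := fun x => X - C x)
          fun i hi j hj h => hζ.pow_inj (hs i hi) (hs j hj) h).symm
    _ ∣ ∏ x ∈ nthRootsFinset n (1 : R), (X - C x) :=
        prod_dvd_prod_of_subset _ _ _ fun x hx => by
          obtain ⟨i, -, rfl⟩ := mem_image.mp hx
          rw [Polynomial.mem_nthRootsFinset hn, ← pow_mul, mul_comm, pow_mul, hζ.pow_eq_one,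
            one_pow]
    _ = X ^ n - 1 := (X_pow_sub_one_eq_prod hn hζ).symm

theorem Polynomial.lt_card_support_of_eval_pow_eq_zero {ζ : R} {p : R[X]} (hp : p ≠ 0)
    (hdeg : p.natDegree < orderOf ζ) {m : ℕ}
    (hroots : ∀ j ∈ Icc 1 m, p.eval (ζ ^ j) = 0) : m < #p.support := by
  by_contra! hm
  set e : Fin #p.support ≃ p.support := p.support.equivFin.symm
  have hlt : ∀ t, (e t : ℕ) < orderOf ζ := fun t =>
    (le_natDegree_of_mem_supp _ (e t).2).trans_lt hdeg
  have hinj : Function.Injective fun t => ζ ^ (e t : ℕ) := fun s t hst =>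
    e.injective (Subtype.ext (pow_injOn_Iio_orderOf (hlt s) (hlt t) hst))
  -- the vanishing of `p` at `ζ, …, ζ ^ #p.support` is a square Vandermonde system
  have hvan := Matrix.eq_zero_of_forall_pow_sum_mul_pow_eq_zero hinj
    (v := fun t => p.coeff (e t) * ζ ^ (e t : ℕ)) fun i => by
      calc ∑ t, p.coeff (e t) * ζ ^ (e t : ℕ) * (ζ ^ (e t : ℕ)) ^ (i : ℕ)
          = ∑ k ∈ p.support, p.coeff k * (ζ ^ ((i : ℕ) + 1)) ^ k := by
            rw [← sum_coe_sort p.support, ← e.sum_comp]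
            refine sum_congr rfl fun t _ => ?_
            ring
        _ = 0 := by
            rw [← hroots (i + 1) (mem_Icc.mpr ⟨by omega, by omega⟩), eval_eq_sum, sum_def]
  have hζ : ζ ≠ 0 := by
    rintro rfl
    have h := pow_orderOf_eq_one (0 : R)
    rw [zero_pow (by omega)] at h
    exact zero_ne_one h
  obtain ⟨k, hk⟩ := nonempty_support_iff.mpr hp
  have := congrFun hvan (e.symm ⟨k, hk⟩)
  simp only [Equiv.apply_symm_apply, Pi.zero_apply, mul_eq_zero, pow_eq_zero_iff', hζ,
    false_and, or_false] at this
  exact mem_support_iff.mp hk this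

end CommRing

section Field

variable {K : Type*} [Field K]

-- A kernel rather than a preimage of `Ideal.span {g}`, so that rank–nullity gives its dimension.
variable (K) in
noncomputable def cyclicCode (n : ℕ) (g : K[X]) : Submodule K (Fin n → K) :=
  LinearMap.ker ((Ideal.Quotient.mkₐ K (Ideal.span {g})).toLinearMap ∘ₗ (degreeLT K n).subtype ∘ₗ
    (degreeLTEquiv K n).symm.toLinearMap)

theorem mem_cyclicCode {n : ℕ} {g : K[X]} {c : Fin n → K} :
    c ∈ cyclicCode K n g ↔ g ∣ ((degreeLTEquiv K n).symm c : K[X]) := by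
  simp [cyclicCode, Ideal.Quotient.eq_zero_iff_mem, Ideal.mem_span_singleton]

theorem finrank_cyclicCode {n : ℕ} {g : K[X]} (hg : g.Monic) (hgn : g.natDegree ≤ n) :
    Module.finrank K (cyclicCode K n g) = n - g.natDegree := by
  set φ := (Ideal.Quotient.mkₐ K (Ideal.span {g})).toLinearMap ∘ₗ (degreeLT K n).subtype ∘ₗ
    (degreeLTEquiv K n).symm.toLinearMap
  have hφ : LinearMap.range φ = ⊤ := by
    refine LinearMap.range_eq_top.mpr fun x => ?_
    obtain ⟨r, rfl⟩ := Ideal.Quotient.mk_surjective x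
    have hr : r %ₘ g ∈ degreeLT K n := mem_degreeLT.mpr <|
      (degree_modByMonic_lt r hg).trans_le (degree_le_natDegree.trans (by exact_mod_cast hgn))
    refine ⟨degreeLTEquiv K n ⟨r %ₘ g, hr⟩, ?_⟩
    simp only [φ, LinearMap.comp_apply, LinearEquiv.coe_coe, LinearEquiv.symm_apply_apply,
      Submodule.subtype_apply, AlgHom.toLinearMap_apply, Ideal.Quotient.mkₐ_eq_mk,
      Ideal.Quotient.eq, Ideal.mem_span_singleton]
    exact ⟨-(r /ₘ g), by linear_combination modByMonic_add_div r g⟩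
  have := LinearMap.finrank_range_add_finrank_ker φ
  rw [hφ, finrank_top, finrank_quotient_span_eq_natDegree, Module.finrank_fin_fun] at this
  exact (Nat.sub_eq_of_eq_add' this.symm).symm

theorem lt_hammingNorm_of_mem_cyclicCode [DecidableEq K] {n m : ℕ} {g : K[X]} {ζ : K}
    (hζ : n ≤ orderOf ζ) (hg : ∀ j ∈ Icc 1 m, g.eval (ζ ^ j) = 0) {c : Fin n → K}
    (hc : c ∈ cyclicCode K n g) (hc0 : c ≠ 0) : m < hammingNorm c := by
  set p := (degreeLTEquiv K n).symm c
  have hp0 : (p : K[X]) ≠ 0 := by simpa [p] using hc0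
  have hpn : (p : K[X]).natDegree < n :=
    (natDegree_lt_iff_degree_lt hp0).mpr (mem_degreeLT.mp p.2)
  obtain ⟨q, hq⟩ := mem_cyclicCode.mp hc
  rw [← (degreeLTEquiv K n).apply_symm_apply c, hammingNorm_degreeLTEquiv]
  exact lt_card_support_of_eval_pow_eq_zero hp0 (hpn.trans_le hζ) fun j hj => by
    rw [hq, eval_mul, hg j hj, zero_mul]

theorem exists_mem_cyclicCode_hammingNorm_le [DecidableEq K] {n : ℕ} {g : K[X]} (hg : g ≠ 0)
    (hgn : g.natDegree < n) :
    ∃ c ∈ cyclicCode K n g, c ≠ 0 ∧ hammingNorm c ≤ g.natDegree + 1 := by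
  have hg' : g ∈ degreeLT K n :=
    mem_degreeLT.mpr (degree_le_natDegree.trans_lt (by exact_mod_cast hgn))
  refine ⟨degreeLTEquiv K n ⟨g, hg'⟩, mem_cyclicCode.mpr (by simp), by simpa using hg, ?_⟩
  rw [hammingNorm_degreeLTEquiv]
  exact card_supp_le_succ_natDegree g

theorem polyOfVec_eq_mk_degreeLTEquiv_symm {n : ℕ} (c : Fin n → K) :
    polyOfVec K n c = AdjoinRoot.mk (X ^ n - 1) ((degreeLTEquiv K n).symm c : K[X]) := by
  simp only [polyOfVec, C_mul_X_pow_eq_monomial]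
  rfl

end Field

theorem reed_solomon_mds_general {F : Type*} [Field F] [Fintype F] [DecidableEq F]
    (n : ℕ) (hn : n = Fintype.card F - 1)
    (α : Fˣ) (hα : Subgroup.zpowers α = ⊤)
    (δ : ℕ) (hδ1 : 1 ≤ δ) (hδn : δ ≤ n)
    (Code : Set (Fin n → F))
    (hCode : Code = {c : Fin n → F | polyOfVec F n c ∈
      Ideal.span {AdjoinRoot.mk (X ^ n - 1 : F[X])
        (∏ i ∈ Finset.Icc 1 (δ - 1), (X - C ((α : F) ^ i)))}}) :
    ∃ Csub : Submodule F (Fin n → F), (Csub : Set (Fin n → F)) = Code ∧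
      Module.finrank F Csub = n - δ + 1 ∧
      sInf {k : ℕ | ∃ u ∈ Code, ∃ v ∈ Code, u ≠ v ∧ hammingDist u v = k} = δ ∧
      δ = n - (n - δ + 1) + 1 := by
  set g := ∏ i ∈ Icc 1 (δ - 1), (X - C ((α : F) ^ i))
  have hprim : IsPrimitiveRoot (α : F) n := by
    have hord : orderOf (α : F) = n := by
      rw [orderOf_units, orderOf_eq_card_of_forall_mem_zpowers fun x => hα ▸ Subgroup.mem_top x,
        Nat.card_eq_fintype_card, Fintype.card_units, hn]
    exact hord ▸ IsPrimitiveRoot.orderOf _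
  have hg : g.Monic := monic_prod_of_monic _ _ fun i _ => monic_X_sub_C _
  have hgdeg : g.natDegree = δ - 1 := by
    rw [natDegree_prod_of_monic _ _ fun i _ => monic_X_sub_C _]
    simp only [natDegree_X_sub_C, sum_const, Nat.card_Icc, smul_eq_mul, mul_one]
    omega
  have hgroots : ∀ j ∈ Icc 1 (δ - 1), g.eval ((α : F) ^ j) = 0 := fun j hj => by
    rw [eval_prod]
    exact prod_eq_zero hj (by simp)
  have hgdvd : g ∣ X ^ n - 1 :=
    hprim.prod_X_sub_C_pow_dvd (by omega) fun i hi => (mem_Icc.mp hi).2.trans_lt (by omega)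
  obtain rfl : Code = cyclicCode F n g := by
    ext c
    rw [hCode, Set.mem_ofPred_eq, polyOfVec_eq_mk_degreeLTEquiv_symm,
      AdjoinRoot.mk_mem_span_mk_iff hgdvd, SetLike.mem_coe, mem_cyclicCode]
  refine ⟨cyclicCode F n g, rfl, by rw [finrank_cyclicCode hg (by omega), hgdeg]; omega, ?_,
    by omega⟩
  refine (cyclicCode F n g).toAddSubgroup.sInf_hammingDist_eq (fun c hc hc0 => ?_) ?_
  · have := lt_hammingNorm_of_mem_cyclicCode hprim.eq_orderOf.le hgroots hc hc0
    omega
  · obtain ⟨c, hc, hc0, hcw⟩ := exists_mem_cyclicCode_hammingNorm_le (n := n) hg.ne_zero (by omega)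
    exact ⟨c, hc, hc0, by omega⟩

/-- Reed–Solomon codes are MDS: For `F_q` a finite field, `n = q - 1`, `α` a
generator of `F_q^*`, `1 ≤ δ ≤ n` and `g(x) = ∏_{i=1}^{δ-1} (x - α^i)`, the cyclic code
`C = π⁻¹(⟨g⟩) ⊆ F_q^n` is a linear code of dimension `k = n - δ + 1` and minimum distance
`d(C) = δ = n - k + 1`, i.e. it attains the Singleton bound. -/
theorem reed_solomon_mds {F : Type*} [Field F] [Fintype F] [DecidableEq F]
    (n : ℕ) (hn : n = Fintype.card F - 1) (hn0 : 0 < n)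
    (α : Fˣ) (hα : Subgroup.zpowers α = ⊤)
    (δ : ℕ) (hδ1 : 1 ≤ δ) (hδn : δ ≤ n)
    (Code : Set (Fin n → F))
    (hCode : Code = {c : Fin n → F | polyOfVec F n c ∈
      Ideal.span {AdjoinRoot.mk (X ^ n - 1 : F[X])
        (∏ i ∈ Finset.Icc 1 (δ - 1), (X - C ((α : F) ^ i)))}}) :
    ∃ Csub : Submodule F (Fin n → F), (Csub : Set (Fin n → F)) = Code ∧
      Module.finrank F Csub = n - δ + 1 ∧
      sInf {k : ℕ | ∃ u ∈ Code, ∃ v ∈ Code, u ≠ v ∧ hammingDist u v = k} = δ ∧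
      δ = n - (n - δ + 1) + 1 :=
  reed_solomon_mds_general n hn α hα δ hδ1 hδn Code hCode
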